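/- Let F be a finite field, K ⊆ F a subfield, and suppose F = V ⊕ W as K-vector spaces, where V and W are K-subspaces of F. Let n, k, m be positive integers, i ∈ {1,…,m}, δ a positive integer, and C ⊆ F^n a k-dimensional F-linear subspace with information set I ⊆ {1,…,n} (the coordinate-restriction map C → F^I is injective); let E = {1,…,n} \ I. Let D ∈ F^{mδ×n} be a matrix each of whose rows lies in C; let E_mat ∈ F^{mδ×n} have all entries in V and all columns indexed by I equal to zero; and let Δ ∈ F^{δ×n} have all entries in W, all columns indexed by I equal to zero, and be such that the K-linear map K^δ → F^n, y ↦ y·Δ, is injective. Define the query Q ∈ F^{mδ×n} by Q = D + E_mat + P, where P is the matrix whose rows (i−1)δ+1,…,iδ equal the rows of Δ and whose other rows are zero. Then for all x, x' ∈ K^{mδ} (embedded into F^{mδ} via the inclusion K → F), x·Q = x'·Q implies that x and x' agree on the coordinates (i−1)δ+1,…,iδ. In other words, the i-th block of the coefficient vector — and hence the i-th file — is uniquely determined by the server response x·Q. -/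
import Mathlib


/-- **Correctness of the code-based computational PIR scheme.**
Let `F` be a finite field, `K ⊆ F` a subfield, and `F = V ⊕ W` as `K`-vector spaces.
Let `C ⊆ F^n` be a `k`-dimensional `F`-linear code with information set `I` (restriction to
`I` is injective on `C`).  Let the query be `Q = D + E_mat + P`, where each row of
`D ∈ F^{mδ×n}` lies in `C`, `E_mat` has entries in `V` and vanishes on the columns in `I`,
`Δ ∈ F^{δ×n}` has entries in `W`, vanishes on the columns in `I`, and `y ↦ y·Δ` is
injective on `K^δ`, and `P` consists of `Δ` placed in the `i`-th block of rows (rows are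
indexed by `Fin m × Fin δ` and the `i`-th block is `{i} × Fin δ`).  Then for all
`x, x' ∈ K^{mδ}`, if the responses `x·Q` and `x'·Q` coincide then `x` and `x'` agree on the
`i`-th block of coordinates: the `i`-th file is uniquely determined by the response. -/
theorem stmt9 (F : Type*) [Field F] [Fintype F] (K : Subfield F)
    (V W : Submodule K F) (hVW : IsCompl V W)
    (n k m δ : ℕ) (hn : 0 < n) (hk : 0 < k) (hm : 0 < m) (hδ : 0 < δ) (i : Fin m)
    (C : Submodule F (Fin n → F)) (hC : Module.finrank F C = k)
    (I : Finset (Fin n))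
    (hinfo : Function.Injective fun c : C => fun j : I => (c : Fin n → F) j)
    (D : Matrix (Fin m × Fin δ) (Fin n) F) (hD : ∀ r, D r ∈ C)
    (Emat : Matrix (Fin m × Fin δ) (Fin n) F)
    (hEV : ∀ r j, Emat r j ∈ V) (hEI : ∀ r, ∀ j ∈ I, Emat r j = 0)
    (Δ : Matrix (Fin δ) (Fin n) F)
    (hΔW : ∀ r j, Δ r j ∈ W) (hΔI : ∀ r, ∀ j ∈ I, Δ r j = 0)
    (hΔinj : Function.Injective fun y : Fin δ → K =>
      fun j : Fin n => ∑ r : Fin δ, (y r : F) * Δ r j)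
    (P : Matrix (Fin m × Fin δ) (Fin n) F)
    (hP : ∀ l r j, P (l, r) j = if l = i then Δ r j else 0) :
    ∀ x x' : Fin m × Fin δ → K,
      (fun j : Fin n => ∑ rr : Fin m × Fin δ, (x rr : F) * (D + Emat + P) rr j) =
        (fun j : Fin n => ∑ rr : Fin m × Fin δ, (x' rr : F) * (D + Emat + P) rr j) →
      ∀ r : Fin δ, x (i, r) = x' (i, r) := by

  intro x x' h r0
  -- difference vector
  set z : Fin m × Fin δ → F := fun rr => (x rr : F) - (x' rr : F) with hz
  have hsum : ∀ j, ∑ rr, z rr * (D rr j + Emat rr j + P rr j) = 0 := by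
    intro j
    have h1 := congrFun h j
    simp only [Matrix.add_apply] at h1
    simp only [z, sub_mul, Finset.sum_sub_distrib, h1, sub_self]
  -- the D-part is a codeword
  have hcmem : (fun j => ∑ rr, z rr * D rr j) ∈ C := by
    have he : (fun j => ∑ rr, z rr * D rr j) = ∑ rr, z rr • D rr := by
      funext j; simp [Finset.sum_apply]
    rw [he]
    exact Submodule.sum_mem _ fun rr _ => Submodule.smul_mem _ _ (hD rr)
  have hczero : ∀ j, ∑ rr, z rr * D rr j = 0 := by
    have h0 : (⟨_, hcmem⟩ : C) = (0 : C) := by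
      apply hinfo
      funext j
      obtain ⟨j, hj⟩ := j
      have hE0 : ∀ rr : Fin m × Fin δ, Emat rr j = 0 := fun rr => hEI rr j hj
      have hP0 : ∀ rr : Fin m × Fin δ, P rr j = 0 := by
        rintro ⟨l, r⟩
        rw [hP]
        split <;> simp [hΔI _ j hj]
      have hs := hsum j
      simp only [hE0, hP0, add_zero] at hs
      simpa using hs
    intro j
    have := congrArg (fun c : C => (c : Fin n → F) j) h0
    simpa using this
  -- E-part plus P-part vanish
  have hEP : ∀ j, (∑ rr, z rr * Emat rr j) + (∑ rr, z rr * P rr j) = 0 := by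
    intro j
    have hs := hsum j
    simp only [mul_add, Finset.sum_add_distrib] at hs
    rw [hczero j, zero_add] at hs
    exact hs
  -- membership in V and W
  have hAV : ∀ j, (∑ rr, z rr * Emat rr j) ∈ V := by
    intro j
    refine Submodule.sum_mem _ fun rr _ => ?_
    have hsm : (x rr - x' rr) • Emat rr j = ((x rr - x' rr : K) : F) * Emat rr j := rfl
    have : z rr * Emat rr j = (x rr - x' rr) • Emat rr j := by
      rw [hsm]; push_cast; simp [z, hz]
    rw [this]
    exact Submodule.smul_mem _ _ (hEV rr j)
  have hBW : ∀ j, (∑ rr, z rr * P rr j) ∈ W := by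
    intro j
    refine Submodule.sum_mem _ fun rr _ => ?_
    obtain ⟨l, r⟩ := rr
    have hmem : P (l, r) j ∈ W := by
      rw [hP]; split
      · exact hΔW r j
      · exact Submodule.zero_mem W
    have hsm : (x (l, r) - x' (l, r)) • P (l, r) j
        = ((x (l, r) - x' (l, r) : K) : F) * P (l, r) j := rfl
    have : z (l, r) * P (l, r) j = (x (l, r) - x' (l, r)) • P (l, r) j := by
      rw [hsm]; push_cast; simp [z, hz]
    rw [this]
    exact Submodule.smul_mem _ _ hmem
  -- P-part is zero
  have hB0 : ∀ j, (∑ rr, z rr * P rr j) = 0 := by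
    intro j
    have hBV : (∑ rr, z rr * P rr j) ∈ V := by
      rw [eq_neg_of_add_eq_zero_right (hEP j)]
      exact Submodule.neg_mem _ (hAV j)
    exact (Submodule.disjoint_def.mp hVW.disjoint) _ hBV (hBW j)
  -- rewrite the P-sum as a sum over the i-th block
  have hblock : ∀ j, (∑ r : Fin δ, z (i, r) * Δ r j) = 0 := by
    intro j
    have hb := hB0 j
    rw [Fintype.sum_prod_type] at hb
    have : ∀ l : Fin m, (∑ r : Fin δ, z (l, r) * P (l, r) j)
        = if l = i then ∑ r : Fin δ, z (l, r) * Δ r j else 0 := by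
      intro l
      by_cases hl : l = i
      · subst hl
        rw [if_pos rfl]
        refine Finset.sum_congr rfl fun r _ => ?_
        rw [hP]; simp
      · rw [if_neg hl]
        refine Finset.sum_eq_zero fun r _ => ?_
        rw [hP]; simp [hl]
    rw [Finset.sum_congr rfl (fun l _ => this l)] at hb
    simpa using hb
  -- conclude via injectivity of y ↦ y·Δ
  have hfin : (fun r : Fin δ => x (i, r)) = fun r : Fin δ => x' (i, r) := by
    apply hΔinj
    funext j
    have hb := hblock j
    simp only [z, sub_mul, Finset.sum_sub_distrib, sub_eq_zero] at hb
    exact hb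
  exact congrFun hfin r0
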